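/- arXiv:2111.15590 — 6 statements merged into one kernel-verified Lean document; each statement's English description precedes it below -/
import Mathlib

section
/- Let C ∈ ℝ^{N×N} with C_{ij} = X B_{ij} cos(Θ_j - Θ_i) for i ≠ j and C_{ii} = X Γ_i - 1 - X Σ_{k≠i} B_{ik}, where X > 0, B_{ij} ≥ 0 for i ≠ j, and Γ := max_i Γ_i > 0. If 0 < X < 1/Γ then all eigenvalues of C have negative real part. -/
/-- If `Γ` is the maximum of the shunt susceptances, `Γ > 0`, and the common
reactance satisfies `0 < X < 1/Γ`, then all (complex) eigenvalues of `C` have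
negative real part. -/
theorem eigenvalues_neg_re_below_crit (N : ℕ) (X Γmax : ℝ) (Γ Θ : Fin N → ℝ)
    (B C : Matrix (Fin N) (Fin N) ℝ)
    (hB : ∀ i j, i ≠ j → 0 ≤ B i j)
    (hΓmax : IsGreatest (Set.range Γ) Γmax)
    (hΓpos : 0 < Γmax)
    (hX : 0 < X) (hXcrit : X < 1 / Γmax)
    (hCoff : ∀ i j, i ≠ j → C i j = X * B i j * Real.cos (Θ j - Θ i))
    (hCdiag : ∀ i, C i i = X * Γ i - 1 - X * ∑ k ∈ Finset.univ.erase i, B i k) :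
    ∀ μ : ℂ, (∃ v : Fin N → ℂ, v ≠ 0 ∧
        (C.map (fun x : ℝ => (x : ℂ))).mulVec v = μ • v) → μ.re < 0 := by
  intro μ ⟨v, hv, hmv⟩
  set A := C.map (fun x : ℝ => (x : ℂ)) with hA
  have hμ : Module.End.HasEigenvalue (Matrix.toLin' A) μ := by
    refine Module.End.hasEigenvalue_of_hasEigenvector ⟨?_, hv⟩
    rw [Module.End.mem_eigenspace_iff, Matrix.toLin'_apply, hmv]
  obtain ⟨k, hk⟩ := eigenvalue_mem_ball hμ
  rw [Metric.mem_closedBall, dist_eq_norm] at hk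
  have h1 : μ.re - C k k ≤ ‖μ - A k k‖ := by
    have : μ.re - C k k = (μ - A k k).re := by
      simp [hA, Matrix.map_apply]
    rw [this]
    exact (Complex.abs_re_le_norm _).trans' (le_abs_self _) |>.trans (le_of_eq rfl)
  have h2 : ∑ j ∈ Finset.univ.erase k, ‖A k j‖ ≤ X * ∑ j ∈ Finset.univ.erase k, B k j := by
    rw [Finset.mul_sum]
    refine Finset.sum_le_sum fun j hj => ?_
    have hjk : k ≠ j := (Finset.ne_of_mem_erase hj).symm
    have : ‖A k j‖ = |C k j| := by simp [hA, Matrix.map_apply]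
    rw [this, hCoff k j hjk, abs_mul, abs_mul, abs_of_pos hX, abs_of_nonneg (hB k j hjk)]
    calc X * B k j * |Real.cos (Θ j - Θ k)| ≤ X * B k j * 1 := by
          exact mul_le_mul_of_nonneg_left (Real.abs_cos_le_one _)
            (mul_nonneg hX.le (hB k j hjk))
      _ = X * B k j := mul_one _
  have hΓk : Γ k ≤ Γmax := hΓmax.2 ⟨k, rfl⟩
  have hXG : X * Γmax < 1 := by
    rw [lt_div_iff₀ hΓpos] at hXcrit; linarith
  have : μ.re ≤ C k k + X * ∑ j ∈ Finset.univ.erase k, B k j := by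
    have := h1.trans (hk.trans h2)
    linarith
  rw [hCdiag k] at this
  have : μ.re ≤ X * Γ k - 1 := by linarith
  have : μ.re ≤ X * Γmax - 1 := by nlinarith
  linarith
end

section
/- Consider an equilibrium (Θ*, E*) of the voltage equations 0 = E^f + (X_i Γ_i - 1)E*_i + X_i Σ_{j≠i} B_{ij}(E*_j cos(Θ*_j - Θ*_i) - E*_i) with E^f > 0, E*_i > 0, X_i > 0, B_{ij} ≥ 0 for i ≠ j, and Γ_i ≤ 0. Then E*_i ≤ E^f for all i. -/
/-- At an equilibrium of the voltage equations with `Γ i ≤ 0`, all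
equilibrium voltage amplitudes are bounded by the common set point `E^f`. -/
theorem equilibrium_voltage_le_setpoint (N : ℕ) (Ef : ℝ) (X Γ Θ E : Fin N → ℝ)
    (B : Matrix (Fin N) (Fin N) ℝ)
    (hEf : 0 < Ef)
    (hE : ∀ i, 0 < E i)
    (hX : ∀ i, 0 < X i)
    (hB : ∀ i j, i ≠ j → 0 ≤ B i j)
    (hΓ : ∀ i, Γ i ≤ 0)
    (heq : ∀ i, 0 = Ef + (X i * Γ i - 1) * E i
        + X i * ∑ j ∈ Finset.univ.erase i, B i j * (E j * Real.cos (Θ j - Θ i) - E i)) :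
    ∀ i, E i ≤ Ef := by
  intro i
  obtain ⟨i0, -, hmax⟩ := Finset.exists_max_image Finset.univ E ⟨i, Finset.mem_univ i⟩
  have hmax' : ∀ j, E j ≤ E i0 := fun j => hmax j (Finset.mem_univ j)
  have key : E i0 ≤ Ef := by
    have h := heq i0
    have hsum : ∑ j ∈ Finset.univ.erase i0,
        B i0 j * (E j * Real.cos (Θ j - Θ i0) - E i0) ≤ 0 := by
      apply Finset.sum_nonpos
      intro j hj
      have hne : j ≠ i0 := Finset.ne_of_mem_erase hj
      have hBij : 0 ≤ B i0 j := hB i0 j (Ne.symm hne)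
      have hcos : Real.cos (Θ j - Θ i0) ≤ 1 := Real.cos_le_one _
      have h1 : E j * Real.cos (Θ j - Θ i0) ≤ E j := by
        nlinarith [hE j]
      have h2 : E j * Real.cos (Θ j - Θ i0) - E i0 ≤ 0 := by
        have := hmax' j; linarith
      exact mul_nonpos_of_nonneg_of_nonpos hBij h2
    have hXsum : X i0 * ∑ j ∈ Finset.univ.erase i0,
        B i0 j * (E j * Real.cos (Θ j - Θ i0) - E i0) ≤ 0 :=
      mul_nonpos_of_nonneg_of_nonpos (hX i0).le hsum
    have hΓE : X i0 * Γ i0 * E i0 ≤ 0 :=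
      mul_nonpos_of_nonpos_of_nonneg
        (mul_nonpos_of_nonneg_of_nonpos (hX i0).le (hΓ i0)) (hE i0).le
    nlinarith [hE i0]
  exact le_trans (hmax' i) key
end

section
/- Let i be an index achieving the maximal equilibrium voltage E*_i = max_j E*_j in the setting above, and define μ := Σ_{j≠i} B_{ij}(E*_j - E*_i) ≤ 0. Then E*_i ≤ E^f + X_i μ; in particular, increasing X_i decreases this upper bound on the maximal voltage whenever μ < 0. -/
/-- For an index `i` with the maximal equilibrium voltage, setting
`μ = ∑_{j≠i} B i j (E j - E i)` one has `μ ≤ 0` and `E i ≤ E^f + X i * μ`. -/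
theorem max_voltage_refined_bound (N : ℕ) (Ef μ : ℝ) (X Γ Θ E : Fin N → ℝ)
    (B : Matrix (Fin N) (Fin N) ℝ) (i : Fin N)
    (hEf : 0 < Ef)
    (hE : ∀ j, 0 < E j)
    (hX : ∀ j, 0 < X j)
    (hB : ∀ k j, k ≠ j → 0 ≤ B k j)
    (hΓ : ∀ j, Γ j ≤ 0)
    (hmax : ∀ j, E j ≤ E i)
    (hμ : μ = ∑ j ∈ Finset.univ.erase i, B i j * (E j - E i))
    (heq : ∀ k, 0 = Ef + (X k * Γ k - 1) * E k
        + X k * ∑ j ∈ Finset.univ.erase k, B k j * (E j * Real.cos (Θ j - Θ k) - E k)) :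
    μ ≤ 0 ∧ E i ≤ Ef + X i * μ := by
  have hμ0 : μ ≤ 0 := by
    rw [hμ]
    apply Finset.sum_nonpos
    intro j hj
    have hji : i ≠ j := fun h => (Finset.mem_erase.mp hj).1 h.symm
    have := hB i j hji
    nlinarith [hmax j]
  refine ⟨hμ0, ?_⟩
  have hsum : (∑ j ∈ Finset.univ.erase i, B i j * (E j * Real.cos (Θ j - Θ i) - E i)) ≤ μ := by
    rw [hμ]
    apply Finset.sum_le_sum
    intro j hj
    have hji : i ≠ j := fun h => (Finset.mem_erase.mp hj).1 h.symm
    have hb := hB i j hji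
    have hc : E j * Real.cos (Θ j - Θ i) ≤ E j := by
      nlinarith [Real.cos_le_one (Θ j - Θ i), (hE j).le]
    nlinarith
  have h := heq i
  nlinarith [(hX i).le, hE i, mul_nonpos_of_nonneg_of_nonpos (hX i).le (hΓ i),
    mul_le_mul_of_nonneg_left hsum (hX i).le,
    mul_nonpos_of_nonpos_of_nonneg (mul_nonpos_of_nonneg_of_nonpos (hX i).le (hΓ i)) (hE i).le]
end

section
/- In the two-node third-order model with E^f > 0, if (E*, ΔΘ*) with E* > 0 satisfies the voltage fixed-point equation 0 = E^f - E* + XΓE* + X B (E* cos(ΔΘ*) - E*), then the largest eigenvalue of the voltage Jacobian, λ_+ = -X(B-Γ) - 1 + X B cos(ΔΘ*), is strictly negative. Equivalently, λ_+ = 0 together with the fixed point equation forces E^f = 0, a contradiction. -/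
/-- At any voltage fixed point of the two-node third-order model with
`E^f > 0`, the largest eigenvalue of the voltage Jacobian is strictly
negative. -/
theorem two_node_no_voltage_instability (X B Γ Ef E ΔΘ : ℝ)
    (hX : 0 < X) (hB : 0 < B) (hEf : 0 < Ef) (hE : 0 < E)
    (hfix : 0 = Ef - E + X * Γ * E + X * B * (E * Real.cos ΔΘ - E)) :
    -X * (B - Γ) - 1 + X * B * Real.cos ΔΘ < 0 := by
  nlinarith [mul_pos hEf hE, sq_nonneg E]
end

section
/- In the two-node third-order model with fixed-point equations 0 = P + B (E*)² sin(ΔΘ*) and 0 = E^f - E* + XΓE* + X B E*(cos(ΔΘ*) - 1), a necessary condition for existence of a real solution is |P| ≤ B (E*)², and under Γ ≤ 0, E^f > 0, X ≥ 0, B > 0 this gives |P| ≤ B (E^f)². -/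
/-- Necessary condition for existence of a two-node fixed point: the
transmitted power is bounded by the line capacity, `|P| ≤ B (E*)² ≤ B (E^f)²`. -/
theorem two_node_power_capacity_bound (P X B Γ Ef E ΔΘ : ℝ)
    (hX : 0 ≤ X) (hB : 0 < B) (hΓ : Γ ≤ 0) (hEf : 0 < Ef) (hE : 0 < E)
    (hfix1 : 0 = P + B * E ^ 2 * Real.sin ΔΘ)
    (hfix2 : 0 = Ef - E + X * Γ * E + X * B * E * (Real.cos ΔΘ - 1)) :
    |P| ≤ B * E ^ 2 ∧ |P| ≤ B * Ef ^ 2 := by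
  have hP : P = -(B * E ^ 2 * Real.sin ΔΘ) := by linarith
  have h1 : |P| ≤ B * E ^ 2 := by
    rw [hP, abs_neg, abs_mul, abs_of_pos (by positivity : (0:ℝ) < B * E ^ 2)]
    have hs : |Real.sin ΔΘ| ≤ 1 := abs_le.mpr ⟨Real.neg_one_le_sin ΔΘ, Real.sin_le_one ΔΘ⟩
    have := mul_le_mul_of_nonneg_left hs (by positivity : (0:ℝ) ≤ B * E ^ 2)
    linarith
  have hEEf : E ≤ Ef := by
    nlinarith [Real.cos_le_one ΔΘ, mul_nonneg hX (neg_nonneg.mpr hΓ),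
      mul_nonneg (mul_nonneg hX hB.le) hE.le]
  refine ⟨h1, h1.trans ?_⟩
  nlinarith [mul_nonneg (mul_nonneg hB.le (sub_nonneg.mpr hEEf)) (by linarith : (0:ℝ) ≤ Ef + E)]
end

section
/- For the two-node third-order model with Γ = 0, a fixed point with equal voltages E* > 0 exists if and only if there exist E* and ΔΘ* solving E* = E^f + X B E*(cos ΔΘ* - 1) and P = B(E*)² sin ΔΘ* simultaneously; in particular, no fixed point exists when P > B(E^f)². -/
/-- For the two-node third-order model with `Γ = 0`, a fixed point with equal
voltages exists iff the reduced pair of equations has a solution; in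
particular no fixed point exists when `P > B (E^f)²`. -/
theorem two_node_fixed_point_existence (P X B Ef : ℝ)
    (hP : 0 < P) (hX : 0 < X) (hB : 0 < B) (hEf : 0 < Ef) :
    ((∃ Θ₁ Θ₂ E : ℝ, 0 < E ∧
        0 = P + B * E ^ 2 * Real.sin (Θ₂ - Θ₁) ∧
        0 = -P + B * E ^ 2 * Real.sin (Θ₁ - Θ₂) ∧
        0 = Ef - E + X * B * (E * Real.cos (Θ₂ - Θ₁) - E) ∧
        0 = Ef - E + X * B * (E * Real.cos (Θ₁ - Θ₂) - E)) ↔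
      (∃ E ΔΘ : ℝ, 0 < E ∧
        E = Ef + X * B * E * (Real.cos ΔΘ - 1) ∧
        P = B * E ^ 2 * Real.sin ΔΘ))
    ∧ (P > B * Ef ^ 2 →
      ¬ ∃ E ΔΘ : ℝ, 0 < E ∧
        E = Ef + X * B * E * (Real.cos ΔΘ - 1) ∧
        P = B * E ^ 2 * Real.sin ΔΘ) := by
  constructor
  · constructor
    · rintro ⟨Θ₁, Θ₂, E, hE, h1, h2, h3, h4⟩
      exact ⟨E, Θ₁ - Θ₂, hE, by linarith, by linarith⟩
    · rintro ⟨E, ΔΘ, hE, h1, h2⟩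
      refine ⟨ΔΘ, 0, E, hE, ?_, ?_, ?_, ?_⟩
      · rw [show (0:ℝ) - ΔΘ = -ΔΘ by ring, Real.sin_neg]; linarith
      · rw [show ΔΘ - 0 = ΔΘ by ring]; linarith
      · rw [show (0:ℝ) - ΔΘ = -ΔΘ by ring, Real.cos_neg]; linarith
      · rw [show ΔΘ - 0 = ΔΘ by ring]; linarith
  · rintro hgt ⟨E, ΔΘ, hE, h1, h2⟩
    have hc : Real.cos ΔΘ ≤ 1 := Real.cos_le_one ΔΘ
    have hs : Real.sin ΔΘ ≤ 1 := Real.sin_le_one ΔΘ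
    have hEEf : E ≤ Ef := by nlinarith [mul_pos (mul_pos hX hB) hE]
    have h5 : P ≤ B * E ^ 2 := by nlinarith [mul_pos hB (pow_pos hE 2)]
    have h6 : E ^ 2 ≤ Ef ^ 2 := by nlinarith
    nlinarith [mul_le_mul_of_nonneg_left h6 hB.le]
end
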